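/- arXiv:2308.15026 — 4 statements merged into one kernel-verified Lean document; each statement's English description precedes it below -/
import Mathlib

section
/- For all r, s, t > 0 one has the explicit identity p_0^{(1)}(t,r,s) = (2t/π) / ((r²+s²+t²) · (1 - 4r²s²/(r²+s²+t²)²)); equivalently, p_0^{(1)}(t,r,s) = (2t/π) · (r²+s²+t²) / ((r²+s²+t²)² - 4r²s²). -/
open MeasureTheory Real Set Filter

/-- Modified Bessel function of the first kind of order `ν`. -/
noncomputable def besselI (ν x : ℝ) : ℝ :=
  ∑' k : ℕ, (x / 2) ^ (2 * (k : ℝ) + ν) / ((Nat.factorial k : ℝ) * Real.Gamma ((k : ℝ) + ν + 1))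

/-- The Bessel heat kernel `p_ζ^{(2)}(t,r,s)`. -/
noncomputable def besselHeat (ζ t r s : ℝ) : ℝ :=
  (r * s) ^ ((1 : ℝ) / 2 - ζ) / (2 * t) * Real.exp (-(r ^ 2 + s ^ 2) / (4 * t)) *
    besselI (ζ - 1 / 2) (r * s / (2 * t))

/-- The `1/2`-stable (Lévy) subordinator density. -/
noncomputable def levyDensity (t τ : ℝ) : ℝ :=
  1 / (2 * Real.sqrt π) * t / τ ^ ((3 : ℝ) / 2) * Real.exp (-t ^ 2 / (4 * τ))

/-- The `1/2`-subordinated Bessel heat kernel `p_ζ^{(1)}(t,r,s)`. -/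
noncomputable def subKernel1 (ζ t r s : ℝ) : ℝ :=
  ∫ τ in Ioi (0 : ℝ), besselHeat ζ τ r s * levyDensity t τ

/-!
For `ζ = 0` the Bessel function has order `-1/2`, and `I_{-1/2}(x) = √(2/(πx)) cosh x`, so the
heat kernel is the sum of the two one-dimensional Gaussians `(4πτ)^{-1/2} e^{-(r ∓ s)²/(4τ)}`.
Against the Lévy density each becomes `t/(4π) · τ⁻² e^{-b/τ}` with `b = ((r ∓ s)² + t²)/4`, and the
substitution `τ ↦ τ⁻¹` gives `∫₀^∞ τ⁻² e^{-b/τ} dτ = 1/b`. Hence `p₀^{(1)}` is the sum of the two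
Poisson kernels `t/(π((r ∓ s)² + t²))`, whose sum is the stated rational function since
`((r - s)² + t²)((r + s)² + t²) = (r² + s² + t²)² - 4r²s²`.
-/

open scoped Nat

lemma factorial_mul_Gamma_nat_add_half (k : ℕ) :
    k ! * Gamma (k + 1 / 2) = (2 * k)! * √π / 4 ^ k := by
  induction k with
  | zero => simp [-one_div, Gamma_one_half_eq]
  | succ k ih =>
    rw [Nat.cast_succ, add_right_comm, Gamma_add_one (by positivity), Nat.factorial_succ,
      show 2 * (k + 1) = 2 * k + 1 + 1 by ring, Nat.factorial_succ, Nat.factorial_succ]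
    push_cast
    rw [show (k + 1 : ℝ) * k ! * ((k + 1 / 2) * Gamma (k + 1 / 2))
      = (k + 1) * (k + 1 / 2) * (k ! * Gamma (k + 1 / 2)) by ring, ih]
    field_simp
    ring

lemma besselI_neg_half {x : ℝ} (hx : 0 < x) :
    besselI (-(1 / 2)) x = √(2 / (π * x)) * cosh x := by
  have hx2 : 0 < x / 2 := by positivity
  have hterm (k : ℕ) : (x / 2) ^ (2 * (k : ℝ) + -(1 / 2)) / (k ! * Gamma (k + -(1 / 2) + 1))
      = √(2 / (π * x)) * (x ^ (2 * k) / (2 * k)!) := by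
    rw [show (k : ℝ) + -(1 / 2) + 1 = k + 1 / 2 by ring, factorial_mul_Gamma_nat_add_half,
      rpow_add hx2, rpow_neg hx2.le, ← sqrt_eq_rpow,
      show 2 * (k : ℝ) = (2 * k : ℕ) by push_cast; ring, rpow_natCast,
      sqrt_div' 2 (by positivity : 0 ≤ π * x), sqrt_mul' π hx.le, sqrt_div' x two_pos.le, div_pow,
      pow_mul]
    have := sqrt_pos.2 pi_pos
    have := sqrt_pos.2 hx
    field_simp
    rw [pow_mul]; norm_num
  rw [besselI, tsum_congr hterm, tsum_mul_left, cosh_eq_tsum]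

lemma besselHeat_zero {τ r s : ℝ} (hτ : 0 < τ) (hr : 0 < r) (hs : 0 < s) :
    besselHeat 0 τ r s
      = (exp (-(r - s) ^ 2 / (4 * τ)) + exp (-(r + s) ^ 2 / (4 * τ))) / (2 * √(π * τ)) := by
  have hrs : 0 < r * s := mul_pos hr hs
  have hroot : √(r * s) * √(2 / (π * (r * s / (2 * τ)))) = 2 * √τ / √π := by
    rw [← sqrt_mul hrs.le, show r * s * (2 / (π * (r * s / (2 * τ)))) = 2 ^ 2 * τ / π by
      field_simp, sqrt_div' _ pi_pos.le, sqrt_mul' _ hτ.le, sqrt_sq two_pos.le]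
  have hminus : -(r ^ 2 + s ^ 2) / (4 * τ) + r * s / (2 * τ) = -(r - s) ^ 2 / (4 * τ) := by
    field_simp
    ring
  have hplus : -(r ^ 2 + s ^ 2) / (4 * τ) + -(r * s / (2 * τ)) = -(r + s) ^ 2 / (4 * τ) := by
    field_simp
    ring
  have := sqrt_pos.2 pi_pos
  have := sqrt_pos.2 hτ
  calc besselHeat 0 τ r s
      = √(r * s) * √(2 / (π * (r * s / (2 * τ)))) / (4 * τ) *
          (exp (-(r ^ 2 + s ^ 2) / (4 * τ) + r * s / (2 * τ))
            + exp (-(r ^ 2 + s ^ 2) / (4 * τ) + -(r * s / (2 * τ)))) := by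
        rw [besselHeat, show (0 : ℝ) - 1 / 2 = -(1 / 2) by norm_num,
          besselI_neg_half (by positivity), sub_zero, ← sqrt_eq_rpow, cosh_eq, exp_add, exp_add]
        ring
    _ = _ := by
        rw [hroot, hminus, hplus, sqrt_mul' _ hτ.le]
        field_simp
        rw [sq_sqrt hτ.le]
        ring

/-- The integrand in the shape of `integral_comp_rpow_Ioi` for the substitution `τ ↦ τ⁻¹`. -/
lemma exp_neg_div_div_sq_eq_rpow_smul {b τ : ℝ} (hτ : 0 < τ) :
    exp (-b / τ) / τ ^ 2 = (|(-1 : ℝ)| * τ ^ ((-1 : ℝ) - 1)) • exp (-b * τ ^ (-1 : ℝ)) := by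
  rw [show (-1 : ℝ) - 1 = -2 by norm_num, rpow_neg hτ.le, rpow_neg_one, rpow_two, smul_eq_mul,
    abs_neg, abs_one, one_mul, div_eq_mul_inv, mul_comm (τ ^ 2)⁻¹, div_eq_mul_inv]

lemma integrableOn_exp_neg_div_div_sq {b : ℝ} (hb : 0 < b) :
    IntegrableOn (fun τ ↦ exp (-b / τ) / τ ^ 2) (Ioi 0) := by
  refine (integrableOn_congr_fun (fun τ hτ ↦ exp_neg_div_div_sq_eq_rpow_smul hτ)
    measurableSet_Ioi).2 ?_
  exact (integrableOn_Ioi_comp_rpow_iff (fun y ↦ exp (-b * y)) (by norm_num)).2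
    (integrableOn_exp_mul_Ioi (neg_lt_zero.2 hb) 0)

lemma integral_exp_neg_div_div_sq {b : ℝ} (hb : 0 < b) :
    ∫ τ in Ioi 0, exp (-b / τ) / τ ^ 2 = 1 / b := by
  rw [setIntegral_congr_fun measurableSet_Ioi
      (fun τ hτ ↦ exp_neg_div_div_sq_eq_rpow_smul hτ),
    integral_comp_rpow_Ioi (fun y ↦ exp (-b * y)) (by norm_num),
    integral_exp_mul_Ioi (neg_lt_zero.2 hb)]
  simp

lemma besselHeat_zero_mul_levyDensity {τ r s : ℝ} (t : ℝ) (hτ : 0 < τ) (hr : 0 < r)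
    (hs : 0 < s) :
    besselHeat 0 τ r s * levyDensity t τ
      = t / (4 * π) * (exp (-(((r - s) ^ 2 + t ^ 2) / 4) / τ) / τ ^ 2
        + exp (-(((r + s) ^ 2 + t ^ 2) / 4) / τ) / τ ^ 2) := by
  have hgauss (u : ℝ) : exp (-u ^ 2 / (4 * τ)) * exp (-t ^ 2 / (4 * τ))
      = exp (-((u ^ 2 + t ^ 2) / 4) / τ) := by
    rw [← exp_add]
    congr 1
    field_simp
    ring
  have hpow : τ ^ ((3 : ℝ) / 2) = τ * √τ := by
    rw [show (3 : ℝ) / 2 = 1 + 1 / 2 by norm_num, rpow_add hτ, rpow_one, sqrt_eq_rpow]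
  rw [besselHeat_zero hτ hr hs, levyDensity, hpow, sqrt_mul' _ hτ.le, ← hgauss, ← hgauss]
  have := sqrt_pos.2 pi_pos
  have := sqrt_pos.2 hτ
  field_simp
  rw [sq_sqrt hτ.le, sq_sqrt pi_pos.le]
  ring

lemma subKernel1_zero {r s t : ℝ} (hr : 0 < r) (hs : 0 < s) (ht : 0 < t) :
    subKernel1 0 t r s = t / π * (1 / ((r - s) ^ 2 + t ^ 2) + 1 / ((r + s) ^ 2 + t ^ 2)) := by
  have hb₁ : 0 < ((r - s) ^ 2 + t ^ 2) / 4 := by positivity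
  have hb₂ : 0 < ((r + s) ^ 2 + t ^ 2) / 4 := by positivity
  rw [subKernel1, setIntegral_congr_fun measurableSet_Ioi
      (fun τ hτ ↦ besselHeat_zero_mul_levyDensity t hτ hr hs),
    integral_const_mul, integral_add (integrableOn_exp_neg_div_div_sq hb₁)
      (integrableOn_exp_neg_div_div_sq hb₂),
    integral_exp_neg_div_div_sq hb₁, integral_exp_neg_div_div_sq hb₂]
  field_simp

theorem stmt6 :
    ∀ r s t : ℝ, 0 < r → 0 < s → 0 < t →
      subKernel1 0 t r s
          = 2 * t / π /
            ((r ^ 2 + s ^ 2 + t ^ 2) * (1 - 4 * r ^ 2 * s ^ 2 / (r ^ 2 + s ^ 2 + t ^ 2) ^ 2)) ∧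
        subKernel1 0 t r s
          = 2 * t / π * (r ^ 2 + s ^ 2 + t ^ 2) /
            ((r ^ 2 + s ^ 2 + t ^ 2) ^ 2 - 4 * r ^ 2 * s ^ 2) := by
  intro r s t hr hs ht
  have hfactor : (r ^ 2 + s ^ 2 + t ^ 2) ^ 2 - 4 * r ^ 2 * s ^ 2
      = ((r - s) ^ 2 + t ^ 2) * ((r + s) ^ 2 + t ^ 2) := by ring
  have hrational : subKernel1 0 t r s = 2 * t / π * (r ^ 2 + s ^ 2 + t ^ 2) /
      ((r ^ 2 + s ^ 2 + t ^ 2) ^ 2 - 4 * r ^ 2 * s ^ 2) := by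
    rw [subKernel1_zero hr hs ht, hfactor]
    field_simp
    ring
  refine ⟨?_, hrational⟩
  have hden : 0 < (r ^ 2 + s ^ 2 + t ^ 2) ^ 2 - 4 * r ^ 2 * s ^ 2 := by
    rw [hfactor]; positivity
  rw [hrational]
  field_simp
end

section
/- Let ζ ∈ (-1/2, ∞). For all r, s, t > 0, setting z := 4r²s²/(r²+s²+t²)² (which satisfies 0 ≤ z < 1 since t > 0), one has p_ζ^{(1)}(t,r,s) = (2Γ(ζ+1)/√π) · t · (r²+s²+t²)^{-(ζ+1)} · Σ_{k=0}^∞ ((ζ+1)/2)_k · ((ζ+2)/2)_k · z^k / (k! · Γ(ζ + 1/2 + k)), where (a)_k := a(a+1)⋯(a+k-1) denotes the Pochhammer symbol (rising factorial). -/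
open MeasureTheory Real Set Filter

/-- The Pochhammer symbol (rising factorial) `(a)_k = a (a+1) ⋯ (a+k-1)`. -/
noncomputable def risingFactorial (a : ℝ) (k : ℕ) : ℝ := ∏ i ∈ Finset.range k, (a + i)

lemma risingFactorial_succ (a : ℝ) (k : ℕ) :
    risingFactorial a (k + 1) = risingFactorial a k * (a + k) :=
  Finset.prod_range_succ _ _

lemma risingFactorial_eq_ascPochhammer_eval (a : ℝ) (k : ℕ) :
    risingFactorial a k = (ascPochhammer ℝ k).eval a := by
  induction k with
  | zero => simp [risingFactorial]
  | succ k ih => rw [risingFactorial_succ, ih, ascPochhammer_succ_eval]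

lemma risingFactorial_two_mul (a : ℝ) (k : ℕ) :
    risingFactorial a (2 * k) =
      4 ^ k * risingFactorial (a / 2) k * risingFactorial ((a + 1) / 2) k := by
  induction k with
  | zero => simp [risingFactorial]
  | succ k ih =>
    rw [show 2 * (k + 1) = 2 * k + 1 + 1 by ring, risingFactorial_succ, risingFactorial_succ,
      risingFactorial_succ, risingFactorial_succ, ih]
    push_cast
    ring

lemma Gamma_add_nat_eq_mul_risingFactorial {x : ℝ} (hx : 0 < x) (n : ℕ) :
    Gamma (x + n) = Gamma x * risingFactorial x n := by
  induction n with
  | zero => simp [risingFactorial]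
  | succ n ih =>
    rw [risingFactorial_succ, Nat.cast_succ, ← add_assoc, Gamma_add_one (by positivity), ih]
    ring

lemma Gamma_add_two_mul_nat {x : ℝ} (hx : 0 < x) (k : ℕ) :
    Gamma (x + 2 * k) =
      Gamma x * 4 ^ k * risingFactorial (x / 2) k * risingFactorial ((x + 1) / 2) k := by
  have h2k : ((2 * k : ℕ) : ℝ) = 2 * k := by push_cast; ring
  rw [← h2k, Gamma_add_nat_eq_mul_risingFactorial hx, risingFactorial_two_mul]
  ring

lemma summable_risingFactorial_mul_risingFactorial_div_Gamma {a b c z : ℝ} (ha : 0 < a)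
    (hb : 0 < b) (hc : 0 < c) (hz : |z| < 1) :
    Summable fun k : ℕ => risingFactorial a k * risingFactorial b k * z ^ k /
      ((Nat.factorial k : ℝ) * Gamma (c + k)) := by
  have hne : ∀ x : ℝ, 0 < x → ∀ k : ℕ, (k : ℝ) ≠ -x := fun x hx k => by
    have : (0 : ℝ) ≤ k := k.cast_nonneg
    linarith
  have hradius := ordinaryHypergeometricSeries_radius_eq_one (𝔸 := ℝ) a b c
    fun k => ⟨hne a ha k, hne b hb k, hne c hc k⟩
  have hz' : z ∈ Metric.eball (0 : ℝ) (ordinaryHypergeometricSeries ℝ a b c).radius := by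
    rwa [hradius, Metric.mem_eball, edist_zero_right, Real.enorm_eq_ofReal_abs,
      ENNReal.ofReal_lt_one]
  refine ((ordinaryHypergeometricSeries ℝ a b c).summable hz' |>.mul_left (Gamma c)⁻¹).congr
    fun k => ?_
  rw [ordinaryHypergeometricSeries_apply_eq, Gamma_add_nat_eq_mul_risingFactorial hc,
    risingFactorial_eq_ascPochhammer_eval, risingFactorial_eq_ascPochhammer_eval,
    risingFactorial_eq_ascPochhammer_eval, smul_eq_mul]
  field_simp

lemma integral_rpow_neg_sub_one_mul_exp_neg_div {a m : ℝ} (ha : 0 < a) (hm : 0 < m) :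
    ∫ τ in Ioi 0, τ ^ (-a - 1) * exp (-(m / τ)) = Gamma a / m ^ a := by
  rw [div_eq_inv_mul, ← inv_rpow hm.le, ← one_div, ← integral_rpow_mul_exp_neg_mul_Ioi ha hm,
    ← integral_comp_rpow_Ioi _ (neg_ne_zero.mpr one_ne_zero)]
  refine setIntegral_congr_fun measurableSet_Ioi fun τ hτ => ?_
  have hτ : 0 < τ := hτ
  rw [smul_eq_mul, abs_neg, abs_one, one_mul, ← rpow_mul hτ.le, ← mul_assoc, ← rpow_add hτ,
    rpow_neg_one, div_inv_eq_mul]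
  ring_nf

lemma integrableOn_rpow_neg_sub_one_mul_exp_neg_div {a m : ℝ} (ha : 0 < a) (hm : 0 < m) :
    IntegrableOn (fun τ => τ ^ (-a - 1) * exp (-(m / τ))) (Ioi 0) :=
  .of_integral_ne_zero <| by
    rw [integral_rpow_neg_sub_one_mul_exp_neg_div ha hm]
    exact (div_pos (Gamma_pos_of_pos ha) (rpow_pos_of_pos hm a)).ne'

lemma integral_tsum_mul_rpow_mul_exp_neg_div {c a : ℕ → ℝ} {m : ℝ} (hm : 0 < m)
    (hc : ∀ k, 0 ≤ c k) (ha : ∀ k, 0 < a k)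
    (hsum : Summable fun k => c k * (Gamma (a k) / m ^ a k)) :
    ∫ τ in Ioi 0, ∑' k, c k * (τ ^ (-a k - 1) * exp (-(m / τ))) =
      ∑' k, c k * (Gamma (a k) / m ^ a k) := by
  have hintegral (k : ℕ) : ∫ τ in Ioi 0, c k * (τ ^ (-a k - 1) * exp (-(m / τ))) =
      c k * (Gamma (a k) / m ^ a k) := by
    rw [integral_const_mul, integral_rpow_neg_sub_one_mul_exp_neg_div (ha k) hm]
  have hnorm (k : ℕ) : ∫ τ in Ioi 0, ‖c k * (τ ^ (-a k - 1) * exp (-(m / τ)))‖ =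
      c k * (Gamma (a k) / m ^ a k) := by
    rw [← hintegral]
    refine setIntegral_congr_fun measurableSet_Ioi fun τ hτ => norm_of_nonneg ?_
    have hτ : 0 < τ := hτ
    have := hc k
    positivity
  rw [← integral_tsum_of_summable_integral_norm
    (fun k => (integrableOn_rpow_neg_sub_one_mul_exp_neg_div (ha k) hm).const_mul (c k))
    (by simpa only [hnorm] using hsum)]
  exact tsum_congr hintegral

lemma rpow_add_two_mul_nat {x : ℝ} (hx : 0 < x) (a : ℝ) (k : ℕ) :
    x ^ (a + 2 * k) = x ^ a * (x ^ 2) ^ k := by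
  rw [rpow_add hx, ← pow_mul, ← rpow_natCast]
  push_cast
  rfl

lemma besselHeat_mul_levyDensity_eq_tsum (ζ t : ℝ) {r s τ : ℝ} (hr : 0 < r) (hs : 0 < s)
    (hτ : 0 < τ) :
    besselHeat ζ τ r s * levyDensity t τ =
      ∑' k : ℕ, t / (2 * √π * 4 ^ ζ) * ((r * s) ^ 2 / 16) ^ k /
          ((Nat.factorial k : ℝ) * Gamma (ζ + 1 / 2 + k)) *
        (τ ^ (-(ζ + 1 + 2 * k) - 1) * exp (-((r ^ 2 + s ^ 2 + t ^ 2) / 4 / τ))) := by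
  have hrs : 0 < r * s := mul_pos hr hs
  have hbessel (k : ℕ) : (r * s / (2 * τ) / 2) ^ (2 * (k : ℝ) + (ζ - 1 / 2)) =
      (r * s) ^ (ζ - 1 / 2) / ((4 : ℝ) ^ (ζ - 1 / 2) * τ ^ (ζ - 1 / 2)) *
        (((r * s) ^ 2 / 16) ^ k / (τ ^ 2) ^ k) := by
    rw [add_comm, rpow_add_two_mul_nat (by positivity), show r * s / (2 * τ) / 2 = r * s / (4 * τ)
      by ring, div_rpow hrs.le (by positivity), mul_rpow (by norm_num) hτ.le]
    ring
  have hτpow (k : ℕ) : τ ^ (-(ζ + 1 + 2 * k) - 1) =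
      (τ ^ (ζ - 1 / 2) * τ ^ ((3 : ℝ) / 2) * τ * (τ ^ 2) ^ k)⁻¹ := by
    rw [← rpow_add hτ, ← rpow_add_one hτ.ne', ← rpow_add_two_mul_nat hτ, ← rpow_neg hτ.le]
    ring_nf
  have hrs_pow : (r * s) ^ ((1 : ℝ) / 2 - ζ) = ((r * s) ^ (ζ - 1 / 2))⁻¹ := by
    rw [← rpow_neg hrs.le, neg_sub]
  have hfour : (4 : ℝ) ^ (ζ - 1 / 2) = 4 ^ ζ / 2 := by
    rw [rpow_sub (by norm_num), show (4 : ℝ) = 2 ^ 2 by norm_num, ← rpow_natCast, ← rpow_mul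
      (by norm_num)]
    norm_num
  have hexp : exp (-((r ^ 2 + s ^ 2 + t ^ 2) / 4 / τ)) =
      exp (-(r ^ 2 + s ^ 2) / (4 * τ)) * exp (-t ^ 2 / (4 * τ)) := by
    rw [← exp_add]
    ring_nf
  simp only [besselHeat, levyDensity, besselI, hbessel, hτpow, hrs_pow, hfour, hexp]
  rw [← tsum_mul_left, ← tsum_mul_right]
  refine tsum_congr fun k => ?_
  have hGamma : Gamma ((k : ℝ) + (ζ - 1 / 2) + 1) = Gamma (ζ + 1 / 2 + k) := by ring_nf
  rw [hGamma]
  field_simp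

lemma mul_Gamma_div_rpow_eq_hypergeometric_term {ζ : ℝ} (hζ : -1 < ζ) (r s t : ℝ) {S : ℝ}
    (hS : 0 < S) (k : ℕ) :
    t / (2 * √π * 4 ^ ζ) * ((r * s) ^ 2 / 16) ^ k /
        ((Nat.factorial k : ℝ) * Gamma (ζ + 1 / 2 + k)) *
      (Gamma (ζ + 1 + 2 * k) / (S / 4) ^ (ζ + 1 + 2 * k)) =
    2 * Gamma (ζ + 1) / √π * t * S ^ (-(ζ + 1)) *
      (risingFactorial ((ζ + 1) / 2) k * risingFactorial ((ζ + 2) / 2) k *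
        (4 * r ^ 2 * s ^ 2 / S ^ 2) ^ k / ((Nat.factorial k : ℝ) * Gamma (ζ + 1 / 2 + k))) := by
  rw [Gamma_add_two_mul_nat (by linarith), rpow_add_two_mul_nat (by positivity),
    div_rpow hS.le (by norm_num), rpow_add_one (by norm_num : (4 : ℝ) ≠ 0), rpow_neg hS.le,
    show (ζ + 1 + 1) / 2 = (ζ + 2) / 2 by ring]
  simp only [div_pow]
  field_simp
  ring

lemma four_mul_sq_mul_sq_div_sq_lt_one (r s : ℝ) {t : ℝ} (ht : 0 < t) :
    4 * r ^ 2 * s ^ 2 / (r ^ 2 + s ^ 2 + t ^ 2) ^ 2 < 1 := by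
  rw [div_lt_one (by positivity)]
  nlinarith [mul_pos (by positivity : 0 < (r - s) ^ 2 + t ^ 2)
    (by positivity : 0 < (r + s) ^ 2 + t ^ 2)]

theorem stmt7 (ζ : ℝ) (hζ : -1/2 < ζ) :
    ∀ r s t : ℝ, 0 < r → 0 < s → 0 < t →
      0 ≤ 4 * r ^ 2 * s ^ 2 / (r ^ 2 + s ^ 2 + t ^ 2) ^ 2 ∧
        4 * r ^ 2 * s ^ 2 / (r ^ 2 + s ^ 2 + t ^ 2) ^ 2 < 1 ∧
        subKernel1 ζ t r s
          = 2 * Real.Gamma (ζ + 1) / Real.sqrt π * t * (r ^ 2 + s ^ 2 + t ^ 2) ^ (-(ζ + 1)) *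
            ∑' k : ℕ, risingFactorial ((ζ + 1) / 2) k * risingFactorial ((ζ + 2) / 2) k *
              (4 * r ^ 2 * s ^ 2 / (r ^ 2 + s ^ 2 + t ^ 2) ^ 2) ^ k /
              ((Nat.factorial k : ℝ) * Real.Gamma (ζ + 1 / 2 + k)) := by
  intro r s t hr hs ht
  have hz0 : 0 ≤ 4 * r ^ 2 * s ^ 2 / (r ^ 2 + s ^ 2 + t ^ 2) ^ 2 := by positivity
  have hz1 := four_mul_sq_mul_sq_div_sq_lt_one r s ht
  refine ⟨hz0, hz1, ?_⟩
  have hk (k : ℕ) : (0 : ℝ) ≤ k := k.cast_nonneg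
  have hterm := mul_Gamma_div_rpow_eq_hypergeometric_term (ζ := ζ) (by linarith) r s t
    (by positivity : 0 < r ^ 2 + s ^ 2 + t ^ 2)
  have hsum := summable_risingFactorial_mul_risingFactorial_div_Gamma (c := ζ + 1 / 2)
    (by linarith : 0 < (ζ + 1) / 2) (by linarith : 0 < (ζ + 2) / 2) (by linarith)
    ((abs_of_nonneg hz0).trans_lt hz1)
  rw [subKernel1, setIntegral_congr_fun measurableSet_Ioi fun τ hτ =>
      besselHeat_mul_levyDensity_eq_tsum ζ t hr hs hτ,
    integral_tsum_mul_rpow_mul_exp_neg_div (by positivity)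
      (fun k => by have := Gamma_pos_of_pos (by linarith [hk k] : 0 < ζ + 1 / 2 + k); positivity)
      (fun k => by linarith [hk k]) ((hsum.mul_left _).congr fun k => (hterm k).symm)]
  rw [← tsum_mul_left]
  exact tsum_congr hterm
end

section
/- Let ζ ∈ (-1/2, ∞) and α ∈ (0,2]. Then for every t > 0 the integral operator with kernel p_ζ^{(α)}(t,·,·) is a contraction on L²((0,∞), s^{2ζ} ds); that is, for every f ∈ L²((0,∞), s^{2ζ} ds), ∫_0^∞ |∫_0^∞ p_ζ^{(α)}(t,r,s) f(s) s^{2ζ} ds|² r^{2ζ} dr ≤ ∫_0^∞ |f(s)|² s^{2ζ} ds. -/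
open MeasureTheory Real Set Filter

/-- `σ` is a family of `α/2`-stable subordinator densities. -/
def IsStableSubordinatorDensity (α : ℝ) (σ : ℝ → ℝ → ℝ) : Prop :=
  (∀ t, 0 < t → ∀ τ, 0 < τ → 0 ≤ σ t τ) ∧
  (∀ t, 0 < t → Measurable (σ t)) ∧
  (∀ t l : ℝ, 0 < t → 0 ≤ l →
    (∫ τ in Ioi (0 : ℝ), Real.exp (-τ * l) * σ t τ) = Real.exp (-t * l ^ (α / 2)))

/-- The `α/2`-subordinated Bessel heat kernel `p_ζ^{(α)}(t,r,s)`. -/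
noncomputable def subKernel (ζ : ℝ) (σ : ℝ → ℝ → ℝ) (t r s : ℝ) : ℝ :=
  ∫ τ in Ioi (0 : ℝ), besselHeat ζ τ r s * σ t τ

/-- `p` is the kernel `p_ζ^{(α)}` for `α ∈ (0,2]`: the Bessel heat kernel itself when `α = 2`,
and the `α/2`-subordinated kernel when `α < 2`. -/
def IsSubordinatedBesselKernel (ζ α : ℝ) (p : ℝ → ℝ → ℝ → ℝ) : Prop :=
  (α = 2 ∧ ∀ t r s : ℝ, p t r s = besselHeat ζ t r s) ∨
  (α < 2 ∧ ∃ σ : ℝ → ℝ → ℝ, IsStableSubordinatorDensity α σ ∧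
    ∀ t r s : ℝ, p t r s = subKernel ζ σ t r s)

/-!
The kernel `p(t, ·, ·)` is symmetric and has mass at most one against `s^{2ζ} ds`, so the Schur
test (Cauchy–Schwarz against the kernel, then Tonelli and symmetry) bounds the operator on
`L²(s^{2ζ} ds)` by one. For the Bessel heat kernel the mass is exactly one: expanding
`I_{ζ-1/2}` in its power series exhibits `p^{(2)}(t,r,s) s^{2ζ}` as the Poisson(`r²/4t`) mixture
of the densities of `√(2t) χ_{2k+2ζ+1}`. Subordination preserves symmetry, and the mass of
`p^{(α)}` is at most `∫ σ_t = 1` (the Laplace transform at `λ = 0`).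
-/

open scoped ENNReal Nat

section Schur

variable {X : Type*} [MeasurableSpace X] {μ : Measure X}

lemma sq_lintegral_mul_le {u g : X → ℝ≥0∞} (hu : AEMeasurable u μ) (hg : AEMeasurable g μ) :
    (∫⁻ a, u a * g a ∂μ) ^ 2 ≤ (∫⁻ a, u a ∂μ) * ∫⁻ a, u a * g a ^ 2 ∂μ := by
  have half : (1 / 2 : ℝ) + 1 / 2 = 1 := by norm_num
  have hsqrt : ∀ x : ℝ≥0∞, (x ^ 2) ^ (1 / 2 : ℝ) = x := fun x => by
    simpa using ENNReal.pow_rpow_inv_natCast two_ne_zero x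
  have holder := ENNReal.lintegral_mul_norm_pow_le hu (hu.mul (hg.pow_const 2))
    (by norm_num : (0 : ℝ) ≤ 1 / 2) (by norm_num : (0 : ℝ) ≤ 1 / 2) half
  have hint : ∀ a, u a ^ (1 / 2 : ℝ) * (u a * g a ^ 2) ^ (1 / 2 : ℝ) = u a * g a := fun a => by
    rw [ENNReal.mul_rpow_of_nonneg _ _ (by norm_num), hsqrt, ← mul_assoc,
      ← ENNReal.rpow_add_of_nonneg _ _ (by norm_num) (by norm_num), half, ENNReal.rpow_one]
  simp only [Pi.mul_apply, hint] at holder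
  calc (∫⁻ a, u a * g a ∂μ) ^ 2
      ≤ ((∫⁻ a, u a ∂μ) ^ (1 / 2 : ℝ) * (∫⁻ a, u a * g a ^ 2 ∂μ) ^ (1 / 2 : ℝ)) ^ 2 := by
        gcongr
    _ = (∫⁻ a, u a ∂μ) * ∫⁻ a, u a * g a ^ 2 ∂μ := by
        rw [mul_pow, ← ENNReal.rpow_natCast, ← ENNReal.rpow_natCast, ← ENNReal.rpow_mul,
          ← ENNReal.rpow_mul]
        norm_num

theorem lintegral_sq_lintegral_kernel_le [SFinite μ] {K : X → X → ℝ≥0∞} {g w : X → ℝ≥0∞}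
    (hK : Measurable (Function.uncurry K)) (hK_comm : ∀ x y, K x y = K y x)
    (hg : Measurable g) (hw : Measurable w) (hK_mass : ∀ᵐ x ∂μ, ∫⁻ y, K x y * w y ∂μ ≤ 1) :
    ∫⁻ x, (∫⁻ y, K x y * g y * w y ∂μ) ^ 2 * w x ∂μ ≤ ∫⁻ y, g y ^ 2 * w y ∂μ := by
  have hK_section : ∀ x, Measurable (K x) := fun x => hK.of_uncurry_left
  calc ∫⁻ x, (∫⁻ y, K x y * g y * w y ∂μ) ^ 2 * w x ∂μ
      ≤ ∫⁻ x, (∫⁻ y, K x y * w y * g y ^ 2 ∂μ) * w x ∂μ := by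
        refine lintegral_mono_ae (hK_mass.mono fun x hx => ?_)
        gcongr
        calc (∫⁻ y, K x y * g y * w y ∂μ) ^ 2 = (∫⁻ y, K x y * w y * g y ∂μ) ^ 2 := by
              simp only [mul_right_comm _ (g _)]
          _ ≤ (∫⁻ y, K x y * w y ∂μ) * ∫⁻ y, K x y * w y * g y ^ 2 ∂μ :=
              sq_lintegral_mul_le ((hK_section x).mul hw).aemeasurable hg.aemeasurable
          _ ≤ ∫⁻ y, K x y * w y * g y ^ 2 ∂μ := mul_le_of_le_one_left' hx
    _ = ∫⁻ x, ∫⁻ y, K x y * w y * g y ^ 2 * w x ∂μ ∂μ :=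
        lintegral_congr fun x =>
          (lintegral_mul_const _ (((hK_section x).mul hw).mul (hg.pow_const 2))).symm
    _ = ∫⁻ y, ∫⁻ x, K y x * w x * (g y ^ 2 * w y) ∂μ ∂μ := by
        rw [lintegral_lintegral_swap (by fun_prop)]
        refine lintegral_congr fun y => lintegral_congr fun x => ?_
        rw [hK_comm]
        ring
    _ = ∫⁻ y, (∫⁻ x, K y x * w x ∂μ) * (g y ^ 2 * w y) ∂μ :=
        lintegral_congr fun y => lintegral_mul_const _ ((hK_section y).mul hw)
    _ ≤ ∫⁻ y, g y ^ 2 * w y ∂μ :=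
        lintegral_mono_ae (hK_mass.mono fun y hy => mul_le_of_le_one_left' hy)

theorem integral_sq_integral_kernel_le [SFinite μ] {K : X → X → ℝ} {f w : X → ℝ}
    (hK : Measurable (Function.uncurry K)) (hK_comm : ∀ x y, K x y = K y x)
    (hf : Measurable f) (hw : Measurable w) (hw_nonneg : ∀ᵐ x ∂μ, 0 ≤ w x)
    (hK_mass : ∀ᵐ x ∂μ, ∫⁻ y, ‖K x y‖ₑ * ‖w y‖ₑ ∂μ ≤ 1)
    (hf2 : Integrable (fun y => f y ^ 2 * w y) μ) :
    ∫ x, (∫ y, K x y * f y * w y ∂μ) ^ 2 * w x ∂μ ≤ ∫ y, f y ^ 2 * w y ∂μ := by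
  have hlintegral : ∫⁻ x, ‖(∫ y, K x y * f y * w y ∂μ) ^ 2 * w x‖ₑ ∂μ
      ≤ ∫⁻ y, ‖f y ^ 2 * w y‖ₑ ∂μ := by
    simp only [enorm_mul, enorm_pow]
    calc ∫⁻ x, ‖∫ y, K x y * f y * w y ∂μ‖ₑ ^ 2 * ‖w x‖ₑ ∂μ
        ≤ ∫⁻ x, (∫⁻ y, ‖K x y‖ₑ * ‖f y‖ₑ * ‖w y‖ₑ ∂μ) ^ 2 * ‖w x‖ₑ ∂μ := by
          gcongr with x
          simpa only [enorm_mul] using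
            enorm_integral_le_lintegral_enorm (μ := μ) fun y => K x y * f y * w y
      _ ≤ ∫⁻ y, ‖f y‖ₑ ^ 2 * ‖w y‖ₑ ∂μ :=
          lintegral_sq_lintegral_kernel_le (K := fun x y => ‖K x y‖ₑ) hK.enorm
            (fun x y => by rw [hK_comm]) hf.enorm hw.enorm hK_mass
  calc ∫ x, (∫ y, K x y * f y * w y ∂μ) ^ 2 * w x ∂μ
      ≤ ‖∫ x, (∫ y, K x y * f y * w y ∂μ) ^ 2 * w x ∂μ‖ := le_norm_self _
    _ ≤ (∫⁻ x, ‖(∫ y, K x y * f y * w y ∂μ) ^ 2 * w x‖ₑ ∂μ).toReal := by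
        simpa only [ofReal_norm] using norm_integral_le_lintegral_norm (μ := μ)
          fun x => (∫ y, K x y * f y * w y ∂μ) ^ 2 * w x
    _ ≤ (∫⁻ y, ‖f y ^ 2 * w y‖ₑ ∂μ).toReal :=
        ENNReal.toReal_mono hf2.hasFiniteIntegral.ne hlintegral
    _ = ∫ y, ‖f y ^ 2 * w y‖ ∂μ := (integral_norm_eq_lintegral_enorm hf2.1).symm
    _ = ∫ y, f y ^ 2 * w y ∂μ :=
        integral_congr_ae (hw_nonneg.mono fun y hy => norm_of_nonneg (by positivity))

end Schur

lemma summable_besselI_term (ν x : ℝ) : Summable fun k : ℕ =>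
    (x / 2) ^ (2 * (k : ℝ) + ν) / ((k ! : ℝ) * Gamma ((k : ℝ) + ν + 1)) := by
  set a := |x / 2|
  refine Summable.of_norm_bounded_eventually_nat
    ((Real.summable_pow_div_factorial (a ^ 2)).mul_left (a ^ ν)) ?_
  filter_upwards [eventually_ge_atTop ⌈|ν| + 1⌉₊] with k hk
  have hk : |ν| + 1 ≤ k := (Nat.le_ceil _).trans (by exact_mod_cast hk)
  have hexp : 0 < 2 * (k : ℝ) + ν := by linarith [neg_abs_le ν]
  have hGamma : 1 ≤ Gamma ((k : ℝ) + ν + 1) := by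
    have h2 : (2 : ℝ) ≤ k + ν + 1 := by linarith [neg_abs_le ν]
    simpa [Gamma_two] using Gamma_strictMonoOn_Ici.monotoneOn (by norm_num) h2 h2
  have hnum : |(x / 2) ^ (2 * (k : ℝ) + ν)| ≤ a ^ ν * (a ^ 2) ^ k := by
    calc |(x / 2) ^ (2 * (k : ℝ) + ν)| ≤ a ^ (2 * (k : ℝ) + ν) := abs_rpow_le_abs_rpow _ _
      _ = a ^ ν * (a ^ 2) ^ k := by
        rw [rpow_add' (abs_nonneg _) hexp.ne', rpow_mul (abs_nonneg _), rpow_two, rpow_natCast,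
          mul_comm]
  rw [norm_div, norm_mul, Real.norm_eq_abs, Real.norm_natCast, Real.norm_of_nonneg (by linarith)]
  calc |(x / 2) ^ (2 * (k : ℝ) + ν)| / (k ! * Gamma (k + ν + 1))
      ≤ a ^ ν * (a ^ 2) ^ k / k ! :=
        div_le_div₀ (by positivity) hnum (by positivity)
          (le_mul_of_one_le_right (by positivity) hGamma)
    _ = _ := mul_div_assoc _ _ _

lemma measurable_besselI (ν : ℝ) : Measurable (besselI ν) :=
  measurable_of_tendsto_metrizable (fun n => Finset.measurable_sum (Finset.range n) fun k _ =>
      by fun_prop)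
    (tendsto_pi_nhds.2 fun x => (summable_besselI_term ν x).hasSum.tendsto_sum_nat)

lemma besselHeat_comm (ζ t r s : ℝ) : besselHeat ζ t r s = besselHeat ζ t s r := by
  rw [besselHeat, besselHeat, mul_comm r s, add_comm (r ^ 2)]

lemma measurable_besselHeat (ζ : ℝ) :
    Measurable fun q : ℝ × ℝ × ℝ => besselHeat ζ q.1 q.2.1 q.2.2 := by
  have := measurable_besselI (ζ - 1 / 2)
  unfold besselHeat
  fun_prop

/-- The density on `(0, ∞)` of `√(2t) X` for `X` chi-distributed with `n` degrees of freedom. -/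
noncomputable def chiDensity (n t s : ℝ) : ℝ :=
  2 / ((4 * t) ^ (n / 2) * Gamma (n / 2)) * (s ^ (n - 1) * exp (-(1 / (4 * t)) * s ^ 2))

lemma chiDensity_nonneg {n t s : ℝ} (hn : 0 < n) (ht : 0 ≤ t) (hs : 0 ≤ s) :
    0 ≤ chiDensity n t s := by
  have := Gamma_pos_of_pos (half_pos hn)
  have := rpow_nonneg (by positivity : 0 ≤ 4 * t) (n / 2)
  have := rpow_nonneg hs (n - 1)
  unfold chiDensity
  positivity

lemma integral_chiDensity {n t : ℝ} (hn : 0 < n) (ht : 0 < t) :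
    ∫ s in Ioi 0, chiDensity n t s = 1 := by
  have hgauss : ∫ s in Ioi 0, s ^ (n - 1) * exp (-(1 / (4 * t)) * s ^ 2)
      = (1 / (4 * t)) ^ (-(n - 1 + 1) / 2) * (1 / 2) * Gamma ((n - 1 + 1) / 2) := by
    rw [← integral_rpow_mul_exp_neg_mul_rpow two_pos (by linarith) (by positivity)]
    simp only [rpow_two]
  have hscale : (1 / (4 * t)) ^ (-(n - 1 + 1) / 2) = (4 * t) ^ (n / 2) := by
    rw [one_div, inv_rpow (by positivity), ← rpow_neg (by positivity)]
    ring_nf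
  have := Gamma_pos_of_pos (half_pos hn)
  have := rpow_pos_of_pos (by positivity : 0 < 4 * t) (n / 2)
  unfold chiDensity
  rw [integral_const_mul, hgauss, hscale, sub_add_cancel]
  field_simp

lemma lintegral_ofReal_chiDensity {n t : ℝ} (hn : 0 < n) (ht : 0 < t) :
    ∫⁻ s in Ioi 0, ENNReal.ofReal (chiDensity n t s) = 1 := by
  have hint := integral_chiDensity hn ht
  rw [← ofReal_integral_eq_lintegral_ofReal (Integrable.of_integral_ne_zero (by simp [hint]))
    ((ae_restrict_mem measurableSet_Ioi).mono fun s hs => chiDensity_nonneg hn ht.le (le_of_lt hs)),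
    hint, ENNReal.ofReal_one]

lemma besselHeat_term_mul_rpow_eq {ζ t r s : ℝ} (hζ : -1 / 2 < ζ) (ht : 0 < t) (hr : 0 < r)
    (hs : 0 < s) (k : ℕ) :
    (r * s) ^ ((1 : ℝ) / 2 - ζ) / (2 * t) * exp (-(r ^ 2 + s ^ 2) / (4 * t)) *
        ((r * s / (2 * t) / 2) ^ (2 * (k : ℝ) + (ζ - 1 / 2)) /
          ((k ! : ℝ) * Gamma ((k : ℝ) + (ζ - 1 / 2) + 1))) * s ^ (2 * ζ)
      = exp (-(r ^ 2 / (4 * t))) * (r ^ 2 / (4 * t)) ^ k / k ! *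
          chiDensity (2 * k + 2 * ζ + 1) t s := by
  set a := 2 * (k : ℝ) + (ζ - 1 / 2) with ha
  set n := 2 * (k : ℝ) + 2 * ζ + 1 with hn
  have h4t : 0 < 4 * t := by positivity
  have hexp : exp (-(r ^ 2 + s ^ 2) / (4 * t))
      = exp (-(r ^ 2 / (4 * t))) * exp (-(1 / (4 * t)) * s ^ 2) := by
    rw [← exp_add]; ring_nf
  have hΓ : Gamma ((k : ℝ) + (ζ - 1 / 2) + 1) = Gamma (n / 2) := by rw [hn]; ring_nf
  have hs_pow : s ^ ((1 : ℝ) / 2 - ζ) * s ^ a * s ^ (2 * ζ) = s ^ (n - 1) := by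
    rw [← rpow_add hs, ← rpow_add hs, ha, hn]; ring_nf
  have hr_pow : r ^ ((1 : ℝ) / 2 - ζ) * r ^ a = (r ^ 2) ^ k := by
    rw [← rpow_add hr, ← pow_mul, ← rpow_natCast, ha]; push_cast; ring_nf
  have ht_pow : (4 * t) ^ (n / 2) * (4 * t) ^ k = (4 * t) ^ a * (4 * t) := by
    rw [← rpow_natCast, ← rpow_add h4t, ← rpow_add_one h4t.ne', ha, hn]; ring_nf
  have hsplit : (r * s / (2 * t) / 2) ^ a = r ^ a * s ^ a / (4 * t) ^ a := by
    rw [← mul_rpow hr.le hs.le, ← div_rpow (by positivity) h4t.le]; ring_nf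
  rw [hexp, hΓ, mul_rpow hr.le hs.le, hsplit, chiDensity, ← hs_pow]
  have hΓpos := Gamma_pos_of_pos (by rw [hn]; linarith [k.cast_nonneg (α := ℝ)] : 0 < n / 2)
  have hTa := rpow_pos_of_pos h4t a
  have hTn := rpow_pos_of_pos h4t (n / 2)
  rw [div_pow]
  -- hide the powers from `field_simp`, which would otherwise normalise their exponents
  generalize r ^ ((1 : ℝ) / 2 - ζ) = A at hr_pow ⊢
  generalize r ^ a = C at hr_pow ⊢
  generalize (4 * t) ^ a = Ta at ht_pow hTa ⊢
  generalize (4 * t) ^ (n / 2) = Tn at ht_pow hTn ⊢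
  generalize Gamma (n / 2) = G at hΓpos ⊢
  field_simp
  linear_combination (A * C) * ht_pow + (4 * t * Ta) * hr_pow

lemma hasSum_besselHeat_mul_rpow {ζ t r s : ℝ} (hζ : -1 / 2 < ζ) (ht : 0 < t) (hr : 0 < r)
    (hs : 0 < s) :
    HasSum (fun k : ℕ => exp (-(r ^ 2 / (4 * t))) * (r ^ 2 / (4 * t)) ^ k / k ! *
        chiDensity (2 * k + 2 * ζ + 1) t s)
      (besselHeat ζ t r s * s ^ (2 * ζ)) := by
  have h := (((summable_besselI_term (ζ - 1 / 2) (r * s / (2 * t))).hasSum.mul_left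
    ((r * s) ^ ((1 : ℝ) / 2 - ζ) / (2 * t) * exp (-(r ^ 2 + s ^ 2) / (4 * t)))).mul_right
    (s ^ (2 * ζ)))
  simp only [besselHeat_term_mul_rpow_eq hζ ht hr hs] at h
  exact h

lemma lintegral_enorm_besselHeat_mul_eq_one {ζ t r : ℝ} (hζ : -1 / 2 < ζ) (ht : 0 < t)
    (hr : 0 < r) :
    ∫⁻ s in Ioi 0, ‖besselHeat ζ t r s‖ₑ * ‖s ^ (2 * ζ)‖ₑ = 1 := by
  set x := r ^ 2 / (4 * t)
  have hn : ∀ k : ℕ, 0 < 2 * (k : ℝ) + 2 * ζ + 1 := fun k => by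
    linarith [k.cast_nonneg (α := ℝ)]
  have hpoisson_nonneg : ∀ k : ℕ, 0 ≤ exp (-x) * x ^ k / k ! := fun k => by positivity
  have hpoisson : HasSum (fun k : ℕ => exp (-x) * x ^ k / k !) 1 :=
    ProbabilityTheory.hasSum_one_poissonMeasure ⟨x, by positivity⟩
  calc ∫⁻ s in Ioi 0, ‖besselHeat ζ t r s‖ₑ * ‖s ^ (2 * ζ)‖ₑ
      = ∫⁻ s in Ioi 0, ∑' k : ℕ, ENNReal.ofReal (exp (-x) * x ^ k / k !) *
          ENNReal.ofReal (chiDensity (2 * k + 2 * ζ + 1) t s) := by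
        refine setLIntegral_congr_fun measurableSet_Ioi fun s hs => ?_
        have hsum := hasSum_besselHeat_mul_rpow hζ ht hr hs
        have hterm_nonneg : ∀ k : ℕ, 0 ≤ exp (-x) * x ^ k / k ! *
            chiDensity (2 * k + 2 * ζ + 1) t s := fun k =>
          mul_nonneg (hpoisson_nonneg k) (chiDensity_nonneg (hn k) ht.le (le_of_lt hs))
        rw [← enorm_mul, ← hsum.tsum_eq, Real.enorm_of_nonneg (tsum_nonneg hterm_nonneg),
          ENNReal.ofReal_tsum_of_nonneg hterm_nonneg hsum.summable]
        simp only [ENNReal.ofReal_mul (hpoisson_nonneg _)]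
    _ = ∑' k : ℕ, ENNReal.ofReal (exp (-x) * x ^ k / k !) := by
        rw [lintegral_tsum fun k => by unfold chiDensity; fun_prop]
        simp only [lintegral_const_mul' _ _ ENNReal.ofReal_ne_top,
          lintegral_ofReal_chiDensity (hn _) ht, mul_one]
    _ = 1 := by
        rw [← ENNReal.ofReal_tsum_of_nonneg hpoisson_nonneg hpoisson.summable, hpoisson.tsum_eq,
          ENNReal.ofReal_one]

lemma subKernel_comm (ζ : ℝ) (σ : ℝ → ℝ → ℝ) (t r s : ℝ) :
    subKernel ζ σ t r s = subKernel ζ σ t s r := by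
  simp only [subKernel, besselHeat_comm ζ _ r s]

lemma measurable_subKernel {ζ t : ℝ} {σ : ℝ → ℝ → ℝ} (hσ : Measurable (σ t)) :
    Measurable (Function.uncurry (subKernel ζ σ t)) := by
  have hintegrand : Measurable fun z : (ℝ × ℝ) × ℝ => besselHeat ζ z.2 z.1.1 z.1.2 * σ t z.2 :=
    ((measurable_besselHeat ζ).comp (measurable_snd.prodMk measurable_fst)).mul
      (hσ.comp measurable_snd)
  exact hintegrand.stronglyMeasurable.integral_prod_right'.measurable

lemma lintegral_enorm_subKernel_mul_le_one {ζ t r : ℝ} {σ : ℝ → ℝ → ℝ} (hζ : -1 / 2 < ζ)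
    (hr : 0 < r) (hσ : Measurable (σ t)) (hσ_mass : ∫⁻ τ in Ioi 0, ‖σ t τ‖ₑ ≤ 1) :
    ∫⁻ s in Ioi 0, ‖subKernel ζ σ t r s‖ₑ * ‖s ^ (2 * ζ)‖ₑ ≤ 1 :=
  calc ∫⁻ s in Ioi 0, ‖subKernel ζ σ t r s‖ₑ * ‖s ^ (2 * ζ)‖ₑ
      ≤ ∫⁻ s in Ioi 0, ∫⁻ τ in Ioi 0, ‖σ t τ‖ₑ * (‖besselHeat ζ τ r s‖ₑ * ‖s ^ (2 * ζ)‖ₑ) := by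
        gcongr with s
        calc ‖subKernel ζ σ t r s‖ₑ * ‖s ^ (2 * ζ)‖ₑ
            ≤ (∫⁻ τ in Ioi 0, ‖besselHeat ζ τ r s * σ t τ‖ₑ) * ‖s ^ (2 * ζ)‖ₑ := by
              gcongr
              exact enorm_integral_le_lintegral_enorm _
          _ = _ := by
              rw [← lintegral_mul_const' _ _ enorm_ne_top]
              refine lintegral_congr fun τ => ?_
              rw [enorm_mul]
              ring
    _ = ∫⁻ τ in Ioi 0, ‖σ t τ‖ₑ * ∫⁻ s in Ioi 0, ‖besselHeat ζ τ r s‖ₑ * ‖s ^ (2 * ζ)‖ₑ := by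
        have hheat : Measurable fun q : ℝ × ℝ => besselHeat ζ q.2 r q.1 :=
          (measurable_besselHeat ζ).comp (measurable_snd.prodMk (measurable_const.prodMk
            measurable_fst))
        rw [lintegral_lintegral_swap ((hσ.comp measurable_snd).enorm.mul
          (hheat.enorm.mul (measurable_fst.pow_const _).enorm)).aemeasurable]
        exact lintegral_congr fun τ => lintegral_const_mul' _ _ enorm_ne_top
    _ = ∫⁻ τ in Ioi 0, ‖σ t τ‖ₑ :=
        setLIntegral_congr_fun measurableSet_Ioi fun τ hτ => by
          rw [lintegral_enorm_besselHeat_mul_eq_one hζ hτ hr, mul_one]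
    _ ≤ 1 := hσ_mass

lemma IsStableSubordinatorDensity.lintegral_enorm_le_one {α t : ℝ} {σ : ℝ → ℝ → ℝ}
    (hσ : IsStableSubordinatorDensity α σ) (ht : 0 < t) : ∫⁻ τ in Ioi 0, ‖σ t τ‖ₑ ≤ 1 := by
  have hmass : ∫ τ in Ioi 0, σ t τ = exp (-t * 0 ^ (α / 2)) := by
    simpa using hσ.2.2 t 0 ht le_rfl
  have hint : IntegrableOn (σ t) (Ioi 0) :=
    Integrable.of_integral_ne_zero (hmass ▸ (exp_pos _).ne')
  rw [← ofReal_integral_norm_eq_lintegral_enorm hint, ← ENNReal.ofReal_one]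
  refine ENNReal.ofReal_le_ofReal ?_
  rw [setIntegral_congr_fun measurableSet_Ioi fun τ hτ => norm_of_nonneg (hσ.1 t ht τ hτ), hmass,
    exp_le_one_iff, neg_mul, neg_nonpos]
  exact mul_nonneg ht.le (rpow_nonneg le_rfl _)

namespace IsSubordinatedBesselKernel

variable {ζ α : ℝ} {p : ℝ → ℝ → ℝ → ℝ}

lemma apply_comm (hp : IsSubordinatedBesselKernel ζ α p) (t r s : ℝ) : p t r s = p t s r := by
  rcases hp with ⟨-, hp⟩ | ⟨-, σ, -, hp⟩
  · rw [hp, hp, besselHeat_comm]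
  · rw [hp, hp, subKernel_comm]

lemma measurable (hp : IsSubordinatedBesselKernel ζ α p) {t : ℝ} (ht : 0 < t) :
    Measurable (Function.uncurry (p t)) := by
  rcases hp with ⟨-, hp⟩ | ⟨-, σ, hσ, hp⟩
  · obtain rfl : p = besselHeat ζ := funext fun t => funext fun r => funext (hp t r)
    exact (measurable_besselHeat ζ).comp (measurable_const.prodMk measurable_id)
  · obtain rfl : p = subKernel ζ σ := funext fun t => funext fun r => funext (hp t r)
    exact measurable_subKernel (hσ.2.1 t ht)

lemma lintegral_enorm_mul_le_one (hp : IsSubordinatedBesselKernel ζ α p) (hζ : -1 / 2 < ζ)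
    {t r : ℝ} (ht : 0 < t) (hr : 0 < r) :
    ∫⁻ s in Ioi 0, ‖p t r s‖ₑ * ‖s ^ (2 * ζ)‖ₑ ≤ 1 := by
  rcases hp with ⟨-, hp⟩ | ⟨-, σ, hσ, hp⟩
  · simp only [hp, lintegral_enorm_besselHeat_mul_eq_one hζ ht hr, le_refl]
  · simp only [hp]
    exact lintegral_enorm_subKernel_mul_le_one hζ hr (hσ.2.1 t ht) (hσ.lintegral_enorm_le_one ht)

end IsSubordinatedBesselKernel

theorem stmt9_general (ζ α : ℝ) (hζ : -1/2 < ζ)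
    (p : ℝ → ℝ → ℝ → ℝ) (hp : IsSubordinatedBesselKernel ζ α p)
    (t : ℝ) (ht : 0 < t) (f : ℝ → ℝ) (hf : Measurable f)
    (hf2 : Integrable (fun s => f s ^ 2 * s ^ (2 * ζ)) (volume.restrict (Ioi 0))) :
    (∫ r in Ioi (0 : ℝ), (∫ s in Ioi (0 : ℝ), p t r s * f s * s ^ (2 * ζ)) ^ 2 * r ^ (2 * ζ))
      ≤ ∫ s in Ioi (0 : ℝ), f s ^ 2 * s ^ (2 * ζ) :=
  integral_sq_integral_kernel_le (hp.measurable ht) (hp.apply_comm t) hf (by fun_prop)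
    ((ae_restrict_mem measurableSet_Ioi).mono fun s hs => rpow_nonneg (le_of_lt hs) _)
    ((ae_restrict_mem measurableSet_Ioi).mono fun r hr => hp.lintegral_enorm_mul_le_one hζ ht hr)
    hf2

theorem stmt9 (ζ α : ℝ) (hζ : -1/2 < ζ) (hα0 : 0 < α) (hα2 : α ≤ 2)
    (p : ℝ → ℝ → ℝ → ℝ) (hp : IsSubordinatedBesselKernel ζ α p)
    (t : ℝ) (ht : 0 < t) (f : ℝ → ℝ) (hf : Measurable f)
    (hf2 : Integrable (fun s => f s ^ 2 * s ^ (2 * ζ)) (volume.restrict (Ioi 0))) :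
    (∫ r in Ioi (0 : ℝ), (∫ s in Ioi (0 : ℝ), p t r s * f s * s ^ (2 * ζ)) ^ 2 * r ^ (2 * ζ))
      ≤ ∫ s in Ioi (0 : ℝ), f s ^ 2 * s ^ (2 * ζ) :=
  stmt9_general ζ α hζ p hp t ht f hf hf2
end

section
/- Let ζ ∈ (-1/2, ∞) and α ∈ (0,2). Then there exists a constant C > 0 (depending only on ζ and α) such that for all τ > 0 and all 0 < z ≤ s/2: p_ζ^{(α)}(τ,z,s) ≤ C · τ / (s^{2ζ+1+α} + τ^{(2ζ+1+α)/α}), and moreover p_ζ^{(α)}(τ,z,s) ≤ C · s^{-(2ζ+1)}. -/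
open MeasureTheory Real Set Filter

/-
Summing the Bessel series against the series of `sinh` gives `I_ν(x) ≤ c_ν (x/2)^ν (1 + x/2) eˣ`,
the factorial comparison being `(2k+1)! ≤ 2^(2k+1) (k+1)! k!`. In the heat kernel the factor `eˣ`,
`x = rs/2τ`, turns `exp(-(r²+s²)/4τ)` into `exp(-(s-r)²/4τ)`, so for `z ≤ s/2` we get
`p^{(2)}(τ,z,s) ≲ τ^(-(ζ+1/2)) exp(-s²/32τ)`, hence both `p^{(2)}(τ,z,s) ≲ τ^(-(ζ+1/2))` and
`p^{(2)}(τ,z,s) ≲ s^(-(2ζ+1)) (1 - exp(-τ/s²))`.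
Only the Laplace transform of `σ_t` is needed to integrate these: `(1 - e^(-τl)) σ_t(τ)`
integrates to `1 - exp(-t l^(α/2))`, and `Γ(β) τ^(-β) = ∫ l^(β-1) e^(-τl) dl` with Tonelli gives
`∫ τ^(-β) σ_t(τ) dτ = t^(-2β/α) (2/α) Γ(2β/α) / Γ(β)`. The resulting bounds
`s^(-(2ζ+1)) min(1, t s^(-α))` and `t^(-(2ζ+1)/α)` combine into the claim.
-/

open scoped Nat ENNReal

theorem Nat.factorial_two_mul_add_one_le (k : ℕ) :
    (2 * k + 1)! ≤ 2 ^ (2 * k + 1) * ((k + 1)! * k !) := by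
  have h := Nat.choose_mul_factorial_mul_factorial (n := 2 * k + 1) (k := k + 1) (by omega)
  rw [show 2 * k + 1 - (k + 1) = k by omega] at h
  rw [← h, ← mul_assoc]
  exact Nat.mul_le_mul_right _ (Nat.mul_le_mul_right _ (Nat.choose_le_two_pow _ _))

theorem Real.Gamma_mul_factorial_le {a : ℝ} (ha : 1 ≤ a) (k : ℕ) :
    Gamma a * k ! ≤ Gamma (k + a) := by
  induction k with
  | zero => simp
  | succ k ih =>
    have hka : 0 < k + a := by positivity
    rw [Nat.factorial_succ, Nat.cast_mul, Nat.cast_succ, add_right_comm, Gamma_add_one hka.ne',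
      mul_left_comm]
    exact mul_le_mul (by linarith) ih (by positivity) hka.le

theorem Real.sinh_le_exp (x : ℝ) : sinh x ≤ exp x := by
  rw [← sinh_add_cosh]
  linarith [cosh_pos x]

theorem Real.rpow_mul_exp_neg_le {γ y : ℝ} (hγ : 0 < γ) (hy : 0 ≤ y) :
    y ^ γ * exp (-y) ≤ γ ^ γ := by
  have hyγ : y / γ ≤ exp (y / γ - 1) := by linarith [add_one_le_exp (y / γ - 1)]
  calc y ^ γ * exp (-y) = γ ^ γ * (y / γ) ^ γ * exp (-y) := by
        rw [div_rpow hy hγ.le, mul_div_cancel₀ _ (rpow_pos_of_pos hγ γ).ne']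
    _ ≤ γ ^ γ * exp (y / γ - 1) ^ γ * exp (-y) := by gcongr
    _ = γ ^ γ * exp (-γ) := by
        rw [← exp_mul, mul_assoc, ← exp_add]; congr 2; field_simp; ring
    _ ≤ γ ^ γ := mul_le_of_le_one_right (by positivity) (exp_le_one_iff.2 (by linarith))

theorem Real.rpow_mul_exp_neg_mul_one_add_le {β y : ℝ} (hβ : 0 < β) (hy : 0 ≤ y) :
    y ^ β * exp (-y) * (1 + y) ≤ β ^ β + (β + 1) ^ (β + 1) := by
  have h₁ := rpow_mul_exp_neg_le hβ hy
  have h₂ := rpow_mul_exp_neg_le (show 0 < β + 1 by linarith) hy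
  rw [rpow_add_one' hy (by linarith)] at h₂
  linarith

theorem Real.div_one_add_le_one_sub_exp_neg {w : ℝ} (hw : 0 ≤ w) :
    w / (1 + w) ≤ 1 - exp (-w) := by
  have h : exp (-w) ≤ 1 / (1 + w) := by
    rw [exp_neg, one_div]
    exact inv_anti₀ (by positivity) (by linarith [add_one_le_exp w])
  have : w / (1 + w) = 1 - 1 / (1 + w) := by field_simp; ring
  linarith

theorem Real.one_sub_exp_neg_le_min (x : ℝ) : 1 - exp (-x) ≤ min 1 x :=
  le_min (by linarith [exp_nonneg (-x)]) (by linarith [add_one_le_exp (-x)])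

theorem le_mul_div_add_of_mul_le {p a b t X Y : ℝ} (hX : 0 < X) (hY : 0 < Y)
    (h₁ : p * X ≤ a * t) (h₂ : p * Y ≤ b * t) : p ≤ (a + b) * t / (X + Y) := by
  rw [le_div_iff₀ (by positivity)]
  linarith

theorem lintegral_rpow_mul_exp_neg_mul_rpow {p q b : ℝ} (hp : 0 < p) (hq : -1 < q) (hb : 0 < b) :
    ∫⁻ x in Ioi (0 : ℝ), ENNReal.ofReal (x ^ q * exp (-b * x ^ p)) =
      ENNReal.ofReal (b ^ (-(q + 1) / p) * (1 / p) * Gamma ((q + 1) / p)) := by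
  rw [← integral_rpow_mul_exp_neg_mul_rpow hp hq hb, ofReal_integral_eq_lintegral_ofReal
    (integrableOn_rpow_mul_exp_neg_mul_rpow hq hp hb)]
  filter_upwards [ae_restrict_mem measurableSet_Ioi] with x hx
  exact mul_nonneg (rpow_nonneg (le_of_lt hx) _) (exp_nonneg _)

theorem lintegral_rpow_mul_exp_neg_mul {β b : ℝ} (hβ : 0 < β) (hb : 0 < b) :
    ∫⁻ x in Ioi (0 : ℝ), ENNReal.ofReal (x ^ (β - 1) * exp (-b * x)) =
      ENNReal.ofReal (b ^ (-β) * Gamma β) := by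
  simpa only [rpow_one, sub_add_cancel, div_one, mul_one] using
    lintegral_rpow_mul_exp_neg_mul_rpow one_pos (show -1 < β - 1 by linarith) hb

noncomputable def besselITerm (ν x : ℝ) (k : ℕ) : ℝ :=
  (x / 2) ^ (2 * (k : ℝ) + ν) / ((k ! : ℝ) * Gamma ((k : ℝ) + ν + 1))

theorem besselI_eq_tsum (ν x : ℝ) : besselI ν x = ∑' k, besselITerm ν x k := rfl

theorem besselITerm_nonneg {ν x : ℝ} (hν : -1 < ν) (hx : 0 ≤ x) (k : ℕ) :
    0 ≤ besselITerm ν x k := by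
  have := Gamma_pos_of_pos (show 0 < (k : ℝ) + ν + 1 by linarith [k.cast_nonneg (α := ℝ)])
  unfold besselITerm
  positivity

theorem besselITerm_zero (ν x : ℝ) : besselITerm ν x 0 = (x / 2) ^ ν / Gamma (ν + 1) := by
  simp [besselITerm]

theorem besselITerm_succ_le {ν x : ℝ} (hν : -1 < ν) (hx : 0 < x) (k : ℕ) :
    besselITerm ν x (k + 1)
      ≤ (x / 2) ^ (ν + 1) / Gamma (ν + 2) * (x ^ (2 * k + 1) / (2 * k + 1)!) := by
  set A := x / 2
  have hA : 0 < A := by positivity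
  have hΓ : 0 < Gamma (ν + 2) := Gamma_pos_of_pos (by linarith)
  have hsplit : A ^ (2 * ((k + 1 : ℕ) : ℝ) + ν) = A ^ (ν + 1) * A ^ (2 * k + 1) := by
    rw [← rpow_natCast, ← rpow_add hA]; push_cast; ring_nf
  have hGamma : Gamma (ν + 2) * k ! ≤ Gamma (((k + 1 : ℕ) : ℝ) + ν + 1) := by
    convert Gamma_mul_factorial_le (a := ν + 2) (by linarith) k using 2; push_cast; ring
  have hfac : ((2 * k + 1)! : ℝ) ≤ 2 ^ (2 * k + 1) * ((k + 1)! * k !) := by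
    exact_mod_cast Nat.factorial_two_mul_add_one_le k
  have hx : x ^ (2 * k + 1) = 2 ^ (2 * k + 1) * A ^ (2 * k + 1) := by
    rw [← mul_pow, mul_div_cancel₀ x two_ne_zero]
  calc besselITerm ν x (k + 1)
      ≤ A ^ (ν + 1) * A ^ (2 * k + 1) / ((k + 1)! * (Gamma (ν + 2) * k !)) := by
        unfold besselITerm; rw [hsplit]; gcongr
    _ = A ^ (ν + 1) / Gamma (ν + 2) * (2 ^ (2 * k + 1) * A ^ (2 * k + 1)
          / (2 ^ (2 * k + 1) * ((k + 1)! * k !))) := by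
        field_simp
    _ ≤ A ^ (ν + 1) / Gamma (ν + 2) * (x ^ (2 * k + 1) / (2 * k + 1)!) := by
        rw [← hx]; gcongr

theorem besselI_nonneg {ν x : ℝ} (hν : -1 < ν) (hx : 0 ≤ x) : 0 ≤ besselI ν x :=
  tsum_nonneg (besselITerm_nonneg hν hx)

theorem besselI_le {ν x : ℝ} (hν : -1 < ν) (hx : 0 < x) :
    besselI ν x
      ≤ (x / 2) ^ ν / Gamma (ν + 1) + (x / 2) ^ (ν + 1) / Gamma (ν + 2) * sinh x := by
  have hsinh := (hasSum_sinh x).mul_left ((x / 2) ^ (ν + 1) / Gamma (ν + 2))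
  have hle := besselITerm_succ_le hν hx
  have hsucc : Summable fun k => besselITerm ν x (k + 1) :=
    hsinh.summable.of_nonneg_of_le (fun k => besselITerm_nonneg hν hx.le _) hle
  rw [besselI_eq_tsum, ((summable_nat_add_iff 1).mp hsucc).tsum_eq_zero_add, besselITerm_zero,
    ← hsinh.tsum_eq]
  exact add_le_add_right (hsucc.tsum_le_tsum hle hsinh.summable) _

theorem besselI_le_mul_exp {ν x : ℝ} (hν : -1 < ν) (hx : 0 < x) :
    besselI ν x
      ≤ (1 / Gamma (ν + 1) + 1 / Gamma (ν + 2)) * (x / 2) ^ ν * (1 + x / 2) * exp x := by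
  have hA : 0 < x / 2 := by positivity
  have := rpow_pos_of_pos hA ν
  have := Gamma_pos_of_pos (show 0 < ν + 1 by linarith)
  have := Gamma_pos_of_pos (show 0 < ν + 2 by linarith)
  have hsinh : x / 2 * sinh x ≤ (1 + x / 2) * exp x := by nlinarith [sinh_le_exp x, exp_pos x]
  have hexp : 1 ≤ (1 + x / 2) * exp x := by nlinarith [one_le_exp hx.le]
  calc besselI ν x
      ≤ (x / 2) ^ ν / Gamma (ν + 1) + (x / 2) ^ ν / Gamma (ν + 2) * (x / 2 * sinh x) := by
        convert besselI_le hν hx using 2; rw [rpow_add_one hA.ne']; ring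
    _ ≤ (x / 2) ^ ν / Gamma (ν + 1) * ((1 + x / 2) * exp x)
          + (x / 2) ^ ν / Gamma (ν + 2) * ((1 + x / 2) * exp x) :=
        add_le_add (le_mul_of_one_le_right (by positivity) hexp) (by gcongr)
    _ = _ := by ring

theorem besselHeat_nonneg {ζ τ r s : ℝ} (hζ : -1 / 2 < ζ) (hτ : 0 < τ) (hr : 0 ≤ r)
    (hs : 0 ≤ s) : 0 ≤ besselHeat ζ τ r s := by
  unfold besselHeat
  have := besselI_nonneg (ν := ζ - 1 / 2) (x := r * s / (2 * τ)) (by linarith) (by positivity)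
  positivity

theorem besselHeat_le {ζ : ℝ} (hζ : -1 / 2 < ζ) :
    ∃ c > 0, ∀ τ r s : ℝ, 0 < τ → 0 < r → 0 < s →
      besselHeat ζ τ r s
        ≤ c * τ ^ (-(ζ + 1 / 2)) * (1 + r * s / (4 * τ)) * exp (-(s - r) ^ 2 / (4 * τ)) := by
  set ν := ζ - 1 / 2 with hν_def
  have hν : -1 < ν := by linarith
  have := Gamma_pos_of_pos (show 0 < ν + 1 by linarith)
  have := Gamma_pos_of_pos (show 0 < ν + 2 by linarith)
  set c := 1 / Gamma (ν + 1) + 1 / Gamma (ν + 2)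
  refine ⟨(4 : ℝ) ^ (-ν) / 2 * c, by positivity, fun τ r s hτ hr hs => ?_⟩
  set x := r * s / (2 * τ)
  have hprefactor : (r * s) ^ ((1 : ℝ) / 2 - ζ) / (2 * τ) * (x / 2) ^ ν
      = (4 : ℝ) ^ (-ν) / 2 * τ ^ (-(ζ + 1 / 2)) := by
    rw [show x / 2 = r * s / (4 * τ) by ring, div_rpow (by positivity) (by positivity),
      show (1 : ℝ) / 2 - ζ = -ν by ring, rpow_neg (by positivity),
      mul_rpow (by norm_num) hτ.le, show -(ζ + 1 / 2) = -ν - 1 by ring, rpow_sub_one hτ.ne',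
      rpow_neg (by norm_num), rpow_neg hτ.le]
    field_simp
  have hexponent : -(r ^ 2 + s ^ 2) / (4 * τ) + x = -(s - r) ^ 2 / (4 * τ) := by
    simp only [x]; field_simp; ring
  calc besselHeat ζ τ r s
      ≤ (r * s) ^ ((1 : ℝ) / 2 - ζ) / (2 * τ) * exp (-(r ^ 2 + s ^ 2) / (4 * τ)) *
          (c * (x / 2) ^ ν * (1 + x / 2) * exp x) := by
        unfold besselHeat; gcongr; exact besselI_le_mul_exp hν (by positivity)
    _ = (r * s) ^ ((1 : ℝ) / 2 - ζ) / (2 * τ) * (x / 2) ^ ν * c * (1 + x / 2)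
          * exp (-(r ^ 2 + s ^ 2) / (4 * τ) + x) := by
        rw [exp_add]; ring
    _ = _ := by rw [hprefactor, hexponent]; ring

theorem besselHeat_le_of_le_half {ζ : ℝ} (hζ : -1 / 2 < ζ) : ∃ c > 0, ∀ τ z s : ℝ,
    0 < τ → 0 < z → z ≤ s / 2 →
      besselHeat ζ τ z s ≤ c * τ ^ (-(ζ + 1 / 2)) * exp (-(s ^ 2 / (32 * τ))) := by
  obtain ⟨c, hc, hbound⟩ := besselHeat_le hζ
  refine ⟨4 * c, by positivity, fun τ z s hτ hz hzs => ?_⟩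
  have hs : 0 < s := by linarith
  set u := s ^ 2 / (16 * τ)
  have hpoly : 1 + z * s / (4 * τ) ≤ 4 * exp (u / 2) := by
    have : z * s / (4 * τ) ≤ 2 * u := by
      simp only [u]; rw [div_le_iff₀ (by positivity)]; field_simp; nlinarith
    linarith [add_one_le_exp (u / 2)]
  have hgauss : exp (-(s - z) ^ 2 / (4 * τ)) ≤ exp (-u) := by
    gcongr
    have h4 : s ^ 2 ≤ 4 * (s - z) ^ 2 := by nlinarith
    simp only [u]; rw [neg_div, neg_le_neg_iff, div_le_div_iff₀ (by positivity) (by positivity)]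
    nlinarith [mul_le_mul_of_nonneg_right h4 hτ.le]
  calc besselHeat ζ τ z s
      ≤ c * τ ^ (-(ζ + 1 / 2)) * (1 + z * s / (4 * τ)) * exp (-(s - z) ^ 2 / (4 * τ)) :=
        hbound τ z s hτ hz hs
    _ ≤ c * τ ^ (-(ζ + 1 / 2)) * (4 * exp (u / 2)) * exp (-u) := by gcongr
    _ = 4 * c * τ ^ (-(ζ + 1 / 2)) * exp (u / 2 + -u) := by rw [exp_add]; ring
    _ = 4 * c * τ ^ (-(ζ + 1 / 2)) * exp (-(s ^ 2 / (32 * τ))) := by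
        congr 2; simp only [u]; ring

theorem besselHeat_le_rpow_of_le_half {ζ : ℝ} (hζ : -1 / 2 < ζ) : ∃ c > 0, ∀ τ z s : ℝ,
    0 < τ → 0 < z → z ≤ s / 2 → besselHeat ζ τ z s ≤ c * τ ^ (-(ζ + 1 / 2)) := by
  obtain ⟨c, hc, hbound⟩ := besselHeat_le_of_le_half hζ
  refine ⟨c, hc, fun τ z s hτ hz hzs => (hbound τ z s hτ hz hzs).trans ?_⟩
  exact mul_le_of_le_one_right (by positivity) (exp_le_one_iff.2 (by simp; positivity))

-- Unlike `τ / s²`, the factor `1 - exp (-(τ / s²))` can be integrated against `σ_t`, which has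
-- infinite mean, by its Laplace transform.
theorem besselHeat_le_rpow_mul_one_sub_exp_of_le_half {ζ : ℝ} (hζ : -1 / 2 < ζ) :
    ∃ c > 0, ∀ τ z s : ℝ, 0 < τ → 0 < z → z ≤ s / 2 →
      besselHeat ζ τ z s ≤ c * s ^ (-(2 * ζ + 1)) * (1 - exp (-(τ / s ^ 2))) := by
  obtain ⟨c, hc, hbound⟩ := besselHeat_le_of_le_half hζ
  set β := ζ + 1 / 2 with hβ_def
  have hβ : 0 < β := by linarith
  set M := β ^ β + (β + 1) ^ (β + 1)
  refine ⟨c * 32 ^ (β + 1) * M, by positivity, fun τ z s hτ hz hzs => ?_⟩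
  have hs : 0 < s := by linarith
  set y := s ^ 2 / (32 * τ)
  have hy : 0 < y := by positivity
  have hscale : τ ^ (-β) = 32 ^ β * s ^ (-(2 * ζ + 1)) * y ^ β := by
    rw [div_rpow (by positivity) (by positivity), mul_rpow (by norm_num) hτ.le, ← rpow_natCast,
      ← rpow_mul hs.le, show -(2 * ζ + 1) = -((2 : ℕ) * β) by push_cast; ring,
      rpow_neg hτ.le, rpow_neg hs.le]
    field_simp
  have hw := div_one_add_le_one_sub_exp_neg (w := τ / s ^ 2) (by positivity)
  have hratio : 1 ≤ 32 * (1 + y) * (1 - exp (-(τ / s ^ 2))) := by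
    have : 32 * (1 + y) * (τ / s ^ 2 / (1 + τ / s ^ 2)) = (32 * τ + s ^ 2) / (τ + s ^ 2) := by
      simp only [y]; field_simp; ring
    refine le_trans ?_ (mul_le_mul_of_nonneg_left hw (by positivity))
    rw [this, le_div_iff₀ (by positivity)]
    linarith
  calc besselHeat ζ τ z s ≤ c * τ ^ (-β) * exp (-y) := hbound τ z s hτ hz hzs
    _ = c * 32 ^ β * s ^ (-(2 * ζ + 1)) * (y ^ β * exp (-y)) := by rw [hscale]; ring
    _ ≤ c * 32 ^ β * s ^ (-(2 * ζ + 1)) * (y ^ β * exp (-y))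
          * (32 * (1 + y) * (1 - exp (-(τ / s ^ 2)))) :=
        le_mul_of_one_le_right (by positivity) hratio
    _ = c * 32 ^ (β + 1) * s ^ (-(2 * ζ + 1)) * (y ^ β * exp (-y) * (1 + y))
          * (1 - exp (-(τ / s ^ 2))) := by
        rw [rpow_add_one (by norm_num)]; ring
    _ ≤ c * 32 ^ (β + 1) * s ^ (-(2 * ζ + 1)) * M * (1 - exp (-(τ / s ^ 2))) := by
        have : 0 ≤ 1 - exp (-(τ / s ^ 2)) := hw.trans' (by positivity)
        gcongr
        exact rpow_mul_exp_neg_mul_one_add_le hβ hy.le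
    _ = c * 32 ^ (β + 1) * M * s ^ (-(2 * ζ + 1)) * (1 - exp (-(τ / s ^ 2))) := by ring

namespace IsStableSubordinatorDensity

variable {α : ℝ} {σ : ℝ → ℝ → ℝ} {t β : ℝ}

theorem ae_nonneg (hσ : IsStableSubordinatorDensity α σ) (ht : 0 < t) :
    ∀ᵐ τ ∂volume.restrict (Ioi 0), 0 ≤ σ t τ := by
  filter_upwards [ae_restrict_mem measurableSet_Ioi] with τ hτ
  exact hσ.1 t ht τ hτ

-- A non-integrable function would have Bochner integral `0`, not `exp (-t * l ^ (α / 2)) > 0`.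
theorem integrableOn_exp_mul (hσ : IsStableSubordinatorDensity α σ) (ht : 0 < t) {l : ℝ}
    (hl : 0 ≤ l) : IntegrableOn (fun τ => exp (-τ * l) * σ t τ) (Ioi 0) :=
  Integrable.of_integral_ne_zero (by rw [hσ.2.2 t l ht hl]; exact (exp_pos _).ne')

theorem lintegral_exp_mul (hσ : IsStableSubordinatorDensity α σ) (ht : 0 < t) {l : ℝ}
    (hl : 0 ≤ l) :
    ∫⁻ τ in Ioi 0, ENNReal.ofReal (exp (-τ * l) * σ t τ)
      = ENNReal.ofReal (exp (-t * l ^ (α / 2))) := by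
  rw [← hσ.2.2 t l ht hl, ofReal_integral_eq_lintegral_ofReal (hσ.integrableOn_exp_mul ht hl)]
  filter_upwards [hσ.ae_nonneg ht] with τ hτ
  exact mul_nonneg (exp_nonneg _) hτ

theorem integrableOn (hσ : IsStableSubordinatorDensity α σ) (ht : 0 < t) :
    IntegrableOn (σ t) (Ioi 0) := by
  simpa using hσ.integrableOn_exp_mul ht le_rfl

theorem integrableOn_one_sub_exp_mul (hσ : IsStableSubordinatorDensity α σ) (ht : 0 < t)
    {l : ℝ} (hl : 0 ≤ l) : IntegrableOn (fun τ => (1 - exp (-τ * l)) * σ t τ) (Ioi 0) := by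
  simpa only [sub_mul, one_mul, Pi.sub_def] using
    (hσ.integrableOn ht).sub (hσ.integrableOn_exp_mul ht hl)

theorem integral_one_sub_exp_mul (hσ : IsStableSubordinatorDensity α σ) (hα : α ≠ 0)
    (ht : 0 < t) {l : ℝ} (hl : 0 ≤ l) :
    ∫ τ in Ioi 0, (1 - exp (-τ * l)) * σ t τ = 1 - exp (-t * l ^ (α / 2)) := by
  have h0 := hσ.2.2 t 0 ht le_rfl
  simp only [mul_zero, exp_zero, one_mul, zero_rpow (div_ne_zero hα two_ne_zero)] at h0
  simp_rw [sub_mul, one_mul]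
  rw [integral_sub (hσ.integrableOn ht) (hσ.integrableOn_exp_mul ht hl), h0, hσ.2.2 t l ht hl]

theorem lintegral_rpow_neg_mul (hσ : IsStableSubordinatorDensity α σ) (hα : 0 < α)
    (ht : 0 < t) (hβ : 0 < β) :
    ∫⁻ τ in Ioi 0, ENNReal.ofReal (τ ^ (-β) * σ t τ)
      = ENNReal.ofReal (t ^ (-(2 * β / α)) * (2 / α) * Gamma (2 * β / α) / Gamma β) := by
  have hΓ := Gamma_pos_of_pos hβ
  set G : ℝ → ℝ → ℝ≥0∞ := fun τ l =>
    ENNReal.ofReal (l ^ (β - 1) * exp (-τ * l)) * ENNReal.ofReal (σ t τ)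
  have hG : Measurable (Function.uncurry G) := by
    have := hσ.2.1 t ht
    unfold G; fun_prop
  have hτ : ∫⁻ τ in Ioi 0, ∫⁻ l in Ioi 0, G τ l
      = ENNReal.ofReal (Gamma β) * ∫⁻ τ in Ioi 0, ENNReal.ofReal (τ ^ (-β) * σ t τ) := by
    rw [← lintegral_const_mul' _ _ ENNReal.ofReal_ne_top]
    refine setLIntegral_congr_fun measurableSet_Ioi fun τ (hτ : 0 < τ) => ?_
    rw [lintegral_mul_const' _ _ ENNReal.ofReal_ne_top, lintegral_rpow_mul_exp_neg_mul hβ hτ,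
      ← ENNReal.ofReal_mul (by positivity), ← ENNReal.ofReal_mul hΓ.le]
    congr 1
    ring
  have hl : ∫⁻ l in Ioi 0, ∫⁻ τ in Ioi 0, G τ l
      = ENNReal.ofReal (t ^ (-(2 * β / α)) * (2 / α) * Gamma (2 * β / α)) := by
    have hLaplace : ∫⁻ l in Ioi 0, ∫⁻ τ in Ioi 0, G τ l
        = ∫⁻ l in Ioi (0 : ℝ), ENNReal.ofReal (l ^ (β - 1) * exp (-t * l ^ (α / 2))) := by
      refine setLIntegral_congr_fun measurableSet_Ioi fun l hl => ?_
      have hl0 : 0 ≤ l ^ (β - 1) := rpow_nonneg (le_of_lt hl) _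
      calc ∫⁻ τ in Ioi 0, G τ l
          = ∫⁻ τ in Ioi 0,
              ENNReal.ofReal (l ^ (β - 1)) * ENNReal.ofReal (exp (-τ * l) * σ t τ) := by
            refine lintegral_congr fun τ => ?_
            simp only [G, ← ENNReal.ofReal_mul hl0,
              ← ENNReal.ofReal_mul (mul_nonneg hl0 (exp_nonneg _)), mul_assoc]
        _ = _ := by
            rw [lintegral_const_mul' _ _ ENNReal.ofReal_ne_top,
              hσ.lintegral_exp_mul ht (le_of_lt hl), ← ENNReal.ofReal_mul hl0]
    rw [hLaplace, lintegral_rpow_mul_exp_neg_mul_rpow (by positivity) (by linarith) ht]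
    congr 1
    field_simp
    ring_nf
  have hswap := lintegral_lintegral_swap hG.aemeasurable (μ := volume.restrict (Ioi 0))
    (ν := volume.restrict (Ioi 0))
  rw [hτ, hl] at hswap
  rw [ENNReal.ofReal_div_of_pos hΓ, ENNReal.eq_div_iff (by positivity) ENNReal.ofReal_ne_top,
    hswap]

theorem ae_rpow_neg_mul_nonneg (hσ : IsStableSubordinatorDensity α σ) (ht : 0 < t) :
    0 ≤ᵐ[volume.restrict (Ioi 0)] fun τ => τ ^ (-β) * σ t τ := by
  filter_upwards [ae_restrict_mem measurableSet_Ioi, hσ.ae_nonneg ht] with τ hτ hστ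
  exact mul_nonneg (rpow_nonneg (le_of_lt hτ) _) hστ

theorem integrableOn_rpow_neg_mul (hσ : IsStableSubordinatorDensity α σ) (hα : 0 < α)
    (ht : 0 < t) (hβ : 0 < β) : IntegrableOn (fun τ => τ ^ (-β) * σ t τ) (Ioi 0) := by
  have := hσ.2.1 t ht
  refine ⟨by fun_prop, ?_⟩
  rw [hasFiniteIntegral_iff_ofReal (hσ.ae_rpow_neg_mul_nonneg ht),
    hσ.lintegral_rpow_neg_mul hα ht hβ]
  exact ENNReal.ofReal_lt_top

theorem integral_rpow_neg_mul (hσ : IsStableSubordinatorDensity α σ) (hα : 0 < α)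
    (ht : 0 < t) (hβ : 0 < β) :
    ∫ τ in Ioi 0, τ ^ (-β) * σ t τ
      = t ^ (-(2 * β / α)) * (2 / α) * Gamma (2 * β / α) / Gamma β := by
  have := Gamma_pos_of_pos hβ
  have := Gamma_pos_of_pos (show 0 < 2 * β / α by positivity)
  rw [integral_eq_lintegral_of_nonneg_ae (hσ.ae_rpow_neg_mul_nonneg ht)
    (hσ.integrableOn_rpow_neg_mul hα ht hβ).aestronglyMeasurable,
    hσ.lintegral_rpow_neg_mul hα ht hβ, ENNReal.toReal_ofReal (by positivity)]

end IsStableSubordinatorDensity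

section subKernel

variable {ζ α : ℝ} {σ : ℝ → ℝ → ℝ}

theorem subKernel_le_integral_of_le {t r s : ℝ} {f : ℝ → ℝ}
    (hσ : IsStableSubordinatorDensity α σ) (hζ : -1 / 2 < ζ) (ht : 0 < t) (hr : 0 ≤ r)
    (hs : 0 ≤ s) (hf : IntegrableOn (fun τ => f τ * σ t τ) (Ioi 0))
    (hle : ∀ τ > 0, besselHeat ζ τ r s ≤ f τ) :
    subKernel ζ σ t r s ≤ ∫ τ in Ioi 0, f τ * σ t τ := by
  refine integral_mono_of_nonneg ?_ hf ?_
  · filter_upwards [ae_restrict_mem measurableSet_Ioi, hσ.ae_nonneg ht] with τ hτ hστ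
    exact mul_nonneg (besselHeat_nonneg hζ hτ hr hs) hστ
  · filter_upwards [ae_restrict_mem measurableSet_Ioi, hσ.ae_nonneg ht] with τ hτ hστ
    exact mul_le_mul_of_nonneg_right (hle τ hτ) hστ

theorem subKernel_le_rpow_of_le_half (hσ : IsStableSubordinatorDensity α σ)
    (hζ : -1 / 2 < ζ) (hα : 0 < α) : ∃ c > 0, ∀ t z s : ℝ, 0 < t → 0 < z → z ≤ s / 2 →
      subKernel ζ σ t z s ≤ c * t ^ (-((2 * ζ + 1) / α)) := by
  obtain ⟨c, hc, hbound⟩ := besselHeat_le_rpow_of_le_half hζ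
  set β := ζ + 1 / 2 with hβ_def
  have hβ : 0 < β := by linarith
  have := Gamma_pos_of_pos hβ
  have := Gamma_pos_of_pos (show 0 < 2 * β / α by positivity)
  refine ⟨c * ((2 / α) * Gamma (2 * β / α) / Gamma β), by positivity,
    fun t z s ht hz hzs => ?_⟩
  calc subKernel ζ σ t z s ≤ ∫ τ in Ioi 0, c * τ ^ (-β) * σ t τ :=
        subKernel_le_integral_of_le hσ hζ ht hz.le (by linarith)
          (((hσ.integrableOn_rpow_neg_mul hα ht hβ).const_mul c).congr
            (ae_of_all _ fun τ => (mul_assoc _ _ _).symm))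
          fun τ hτ => hbound τ z s hτ hz hzs
    _ = c * ((2 / α) * Gamma (2 * β / α) / Gamma β) * t ^ (-((2 * ζ + 1) / α)) := by
        simp_rw [mul_assoc]
        rw [integral_const_mul, hσ.integral_rpow_neg_mul hα ht hβ,
          show 2 * β / α = (2 * ζ + 1) / α by ring]
        ring

theorem subKernel_le_rpow_mul_min_of_le_half (hσ : IsStableSubordinatorDensity α σ)
    (hζ : -1 / 2 < ζ) (hα : α ≠ 0) : ∃ c > 0, ∀ t z s : ℝ, 0 < t → 0 < z → z ≤ s / 2 →
      subKernel ζ σ t z s ≤ c * s ^ (-(2 * ζ + 1)) * min 1 (t * s ^ (-α)) := by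
  obtain ⟨c, hc, hbound⟩ := besselHeat_le_rpow_mul_one_sub_exp_of_le_half hζ
  refine ⟨c, hc, fun t z s ht hz hzs => ?_⟩
  have hs : 0 < s := by linarith
  have hl : 0 ≤ (s ^ 2)⁻¹ := by positivity
  have hsα : ((s ^ 2)⁻¹) ^ (α / 2) = s ^ (-α) := by
    rw [inv_rpow (by positivity), ← rpow_natCast, ← rpow_mul hs.le, rpow_neg hs.le]
    congr 2; push_cast; ring
  set K := c * s ^ (-(2 * ζ + 1))
  calc subKernel ζ σ t z s ≤ ∫ τ in Ioi 0, K * (1 - exp (-τ * (s ^ 2)⁻¹)) * σ t τ := by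
        refine subKernel_le_integral_of_le hσ hζ ht hz.le hs.le ?_ fun τ hτ => ?_
        · exact ((hσ.integrableOn_one_sub_exp_mul ht hl).const_mul K).congr
            (ae_of_all _ fun τ => (mul_assoc _ _ _).symm)
        · simpa only [neg_mul, div_eq_mul_inv] using hbound τ z s hτ hz hzs
    _ = K * (1 - exp (-(t * s ^ (-α)))) := by
        simp_rw [mul_assoc K]
        rw [integral_const_mul, hσ.integral_one_sub_exp_mul hα ht hl, hsα, neg_mul]
    _ ≤ K * min 1 (t * s ^ (-α)) := by
        gcongr
        exact one_sub_exp_neg_le_min _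

end subKernel

theorem stmt16_general (ζ α : ℝ) (hζ : -1/2 < ζ) (hα0 : 0 < α)
    (σ : ℝ → ℝ → ℝ) (hσ : IsStableSubordinatorDensity α σ) :
    ∃ C : ℝ, 0 < C ∧
      ∀ τ z s : ℝ, 0 < τ → 0 < z → z ≤ s / 2 →
        subKernel ζ σ τ z s
            ≤ C * τ / (s ^ (2 * ζ + 1 + α) + τ ^ ((2 * ζ + 1 + α) / α)) ∧
          subKernel ζ σ τ z s ≤ C * s ^ (-(2 * ζ + 1)) := by
  obtain ⟨c₁, hc₁, hspace⟩ := subKernel_le_rpow_mul_min_of_le_half hσ hζ hα0.ne'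
  obtain ⟨c₂, hc₂, htime⟩ := subKernel_le_rpow_of_le_half hσ hζ hα0
  refine ⟨c₁ + c₂, by positivity, fun τ z s hτ hz hzs => ?_⟩
  have hs : 0 < s := by linarith
  have h₁ := hspace τ z s hτ hz hzs
  refine ⟨le_mul_div_add_of_mul_le (by positivity) (by positivity) ?_ ?_, ?_⟩
  · calc subKernel ζ σ τ z s * s ^ (2 * ζ + 1 + α)
        ≤ c₁ * s ^ (-(2 * ζ + 1)) * (τ * s ^ (-α)) * s ^ (2 * ζ + 1 + α) := by
          gcongr; exact h₁.trans (by gcongr; exact min_le_right _ _)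
      _ = c₁ * τ := by rw [rpow_add hs, rpow_neg hs.le, rpow_neg hs.le]; field_simp
  · calc subKernel ζ σ τ z s * τ ^ ((2 * ζ + 1 + α) / α)
        ≤ c₂ * τ ^ (-((2 * ζ + 1) / α)) * τ ^ ((2 * ζ + 1 + α) / α) := by
          gcongr; exact htime τ z s hτ hz hzs
      _ = c₂ * τ := by
          rw [add_div (2 * ζ + 1) α α, div_self hα0.ne', rpow_add_one hτ.ne', rpow_neg hτ.le]
          field_simp
  · calc subKernel ζ σ τ z s ≤ c₁ * s ^ (-(2 * ζ + 1)) * 1 :=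
        h₁.trans (by gcongr; exact min_le_left _ _)
      _ ≤ (c₁ + c₂) * s ^ (-(2 * ζ + 1)) := by rw [mul_one]; gcongr; linarith

theorem stmt16 (ζ α : ℝ) (hζ : -1/2 < ζ) (hα0 : 0 < α) (hα2 : α < 2)
    (σ : ℝ → ℝ → ℝ) (hσ : IsStableSubordinatorDensity α σ) :
    ∃ C : ℝ, 0 < C ∧
      ∀ τ z s : ℝ, 0 < τ → 0 < z → z ≤ s / 2 →
        subKernel ζ σ τ z s
            ≤ C * τ / (s ^ (2 * ζ + 1 + α) + τ ^ ((2 * ζ + 1 + α) / α)) ∧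
          subKernel ζ σ τ z s ≤ C * s ^ (-(2 * ζ + 1)) :=
  stmt16_general ζ α hζ hα0 σ hσ
end
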